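/- arXiv:math/0112026 — 7 statements merged into one kernel-verified Lean document; each statement's English description precedes it below -/
import Mathlib

section
/- If X is a quandle, the degenerate subgroups are preserved by the boundary map: the boundary ∂_n of any n-tuple (x₁,...,x_n) with x_i = x_{i+1} for some i is a Λ-linear combination of (n-1)-tuples each of which has two equal adjacent entries (for n ≥ 3). -/
open LaurentPolynomial

/-- The twisted rack boundary of a quandle `X` with coefficients in
`Λ = ℤ[T,T⁻¹]`, on a generating `(n+1)`-tuple. -/
noncomputable def rackBoundary {X : Type*} (op : X → X → X) (n : ℕ)
    (x : Fin (n + 1) → X) : (Fin n → X) →₀ LaurentPolynomial ℤ :=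
  ∑ i : Fin (n + 1),
    ((-1 : LaurentPolynomial ℤ) ^ ((i : ℕ) + 1)) •
      ((T 1 : LaurentPolynomial ℤ) •
          Finsupp.single (fun j : Fin n => x (i.succAbove j)) 1 -
        Finsupp.single
          (fun j : Fin n =>
            if j.castSucc < i then op (x j.castSucc) (x i) else x j.succ) 1)

/-- The degenerate submodule: the span of (characteristic functions of)
tuples with two equal adjacent entries. -/
noncomputable def degenerateSubmodule {X : Type*} (n : ℕ) :
    Submodule (LaurentPolynomial ℤ) ((Fin n → X) →₀ LaurentPolynomial ℤ) :=
  Submodule.span (LaurentPolynomial ℤ)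
    ((fun y : Fin n → X => Finsupp.single y (1 : LaurentPolynomial ℤ)) ''
      {y | ∃ i : ℕ, ∃ h : i + 1 < n,
        y ⟨i, Nat.lt_of_succ_lt h⟩ = y ⟨i + 1, h⟩})

noncomputable def bTerm {X : Type*} (op : X → X → X) (n : ℕ)
    (x : Fin (n + 1) → X) (i : Fin (n + 1)) : (Fin n → X) →₀ LaurentPolynomial ℤ :=
  ((-1 : LaurentPolynomial ℤ) ^ ((i : ℕ) + 1)) •
    ((T 1 : LaurentPolynomial ℤ) •
        Finsupp.single (fun j : Fin n => x (i.succAbove j)) 1 -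
      Finsupp.single
        (fun j : Fin n =>
          if j.castSucc < i then op (x j.castSucc) (x i) else x j.succ) 1)

lemma single_mem_degenerate {X : Type*} {n : ℕ} {y : Fin n → X}
    (m : ℕ) (hm : m + 1 < n) (hy : y ⟨m, Nat.lt_of_succ_lt hm⟩ = y ⟨m + 1, hm⟩) :
    Finsupp.single y (1 : LaurentPolynomial ℤ) ∈ degenerateSubmodule (X := X) n :=
  Submodule.subset_span ⟨y, ⟨m, hm, hy⟩, rfl⟩

lemma bTerm_mem {X : Type*} (op : X → X → X) (n : ℕ) (x : Fin (n + 1) → X)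
    (i : Fin (n + 1)) (m : ℕ) (hm : m + 1 < n)
    (ha : x (i.succAbove ⟨m, Nat.lt_of_succ_lt hm⟩) = x (i.succAbove ⟨m + 1, hm⟩))
    (hb : (if (Fin.castSucc ⟨m, Nat.lt_of_succ_lt hm⟩ : Fin (n+1)) < i then
            op (x (Fin.castSucc ⟨m, Nat.lt_of_succ_lt hm⟩)) (x i) else x (Fin.succ ⟨m, Nat.lt_of_succ_lt hm⟩)) =
          (if (Fin.castSucc ⟨m + 1, hm⟩ : Fin (n+1)) < i then
            op (x (Fin.castSucc ⟨m + 1, hm⟩)) (x i) else x (Fin.succ ⟨m + 1, hm⟩))) :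
    bTerm op n x i ∈ degenerateSubmodule (X := X) n := by
  apply Submodule.smul_mem
  exact sub_mem (Submodule.smul_mem _ _ (single_mem_degenerate m hm ha))
    (single_mem_degenerate m hm hb)


/-- For a quandle `X`, the boundary of a degenerate tuple (one with two equal
adjacent entries) lies in the degenerate submodule: `∂ₙ(Dₙ) ⊆ D_{n-1}`
(for tuples of length at least `3`). -/
theorem rackBoundary_degenerate_mem {X : Type*} (op : X → X → X)
    (h1 : ∀ a, op a a = a)
    (h3 : ∀ a b c, op (op a b) c = op (op a c) (op b c))
    (n : ℕ) (hn : 2 ≤ n) (x : Fin (n + 1) → X)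
    (hx : ∃ i : Fin n, x i.castSucc = x i.succ) :
    rackBoundary op n x ∈ degenerateSubmodule (X := X) n := by
  obtain ⟨k, hk⟩ := hx
  have hne : (k.succ : Fin (n+1)) ≠ k.castSucc := by
    simp [Fin.ext_iff]
  have hsum : rackBoundary op n x = ∑ i, bTerm op n x i := rfl
  have hcancel : bTerm op n x k.succ = - bTerm op n x k.castSucc := by
    have hd : (fun j : Fin n => x (k.succ.succAbove j)) =
        (fun j : Fin n => x (k.castSucc.succAbove j)) := by
      funext j
      rcases lt_trichotomy (j : ℕ) (k : ℕ) with h | h | h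
      · rw [Fin.succAbove_of_castSucc_lt _ _ (by rw [Fin.lt_def]; simp only [Fin.coe_castSucc, Fin.val_succ]; omega),
            Fin.succAbove_of_castSucc_lt _ _ (by rw [Fin.lt_def]; simp only [Fin.coe_castSucc]; omega)]
      · rw [Fin.succAbove_of_castSucc_lt _ _ (by rw [Fin.lt_def]; simp only [Fin.coe_castSucc, Fin.val_succ]; omega),
            Fin.succAbove_of_le_castSucc _ _ (by rw [Fin.le_def]; simp only [Fin.coe_castSucc]; omega)]
        have e1 : j.castSucc = k.castSucc := by
          rw [Fin.ext_iff]; simp only [Fin.coe_castSucc]; omega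
        have e2 : j.succ = k.succ := by
          rw [Fin.ext_iff]; simp only [Fin.val_succ]; omega
        rw [e1, e2, hk]
      · rw [Fin.succAbove_of_le_castSucc _ _ (by rw [Fin.le_def]; simp only [Fin.coe_castSucc, Fin.val_succ]; omega),
            Fin.succAbove_of_le_castSucc _ _ (by rw [Fin.le_def]; simp only [Fin.coe_castSucc]; omega)]
    have hf : (fun j : Fin n => if j.castSucc < k.succ then op (x j.castSucc) (x k.succ) else x j.succ) =
        (fun j : Fin n => if j.castSucc < k.castSucc then op (x j.castSucc) (x k.castSucc) else x j.succ) := by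
      funext j
      rcases lt_trichotomy (j : ℕ) (k : ℕ) with h | h | h
      · rw [if_pos (by rw [Fin.lt_def]; simp only [Fin.coe_castSucc, Fin.val_succ]; omega),
            if_pos (by rw [Fin.lt_def]; simp only [Fin.coe_castSucc]; omega), hk]
      · rw [if_pos (by rw [Fin.lt_def]; simp only [Fin.coe_castSucc, Fin.val_succ]; omega),
            if_neg (by rw [Fin.lt_def]; simp only [Fin.coe_castSucc]; omega)]
        have e1 : j.castSucc = k.castSucc := by
          rw [Fin.ext_iff]; simp only [Fin.coe_castSucc]; omega
        have e2 : j.succ = k.succ := by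
          rw [Fin.ext_iff]; simp only [Fin.val_succ]; omega
        rw [e1, e2, ← hk]
        exact h1 _
      · rw [if_neg (by rw [Fin.lt_def]; simp only [Fin.coe_castSucc, Fin.val_succ]; omega),
            if_neg (by rw [Fin.lt_def]; simp only [Fin.coe_castSucc]; omega)]
    simp only [bTerm, hd, hf, Fin.val_succ, Fin.coe_castSucc]
    rw [pow_succ, mul_smul, neg_one_smul, smul_neg]
  have hmem2 : (k.succ : Fin (n+1)) ∈ Finset.univ.erase k.castSucc :=
    Finset.mem_erase.mpr ⟨hne, Finset.mem_univ _⟩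
  rw [hsum, ← Finset.sum_erase_add _ _ (Finset.mem_univ k.castSucc),
      ← Finset.sum_erase_add _ _ hmem2, hcancel, add_assoc, neg_add_cancel, add_zero]
  apply Submodule.sum_mem
  intro i hi
  have hi2 : i ≠ k.succ := (Finset.mem_erase.mp hi).1
  have hi1 : i ≠ k.castSucc := (Finset.mem_erase.mp (Finset.mem_erase.mp hi).2).1
  have hik : (i : ℕ) ≠ (k : ℕ) + 1 := fun h => hi2 (by rw [Fin.ext_iff, Fin.val_succ]; exact h)
  have hik2 : (i : ℕ) ≠ (k : ℕ) := fun h => hi1 (by rw [Fin.ext_iff, Fin.coe_castSucc]; exact h)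
  have hin : (i : ℕ) < n + 1 := i.isLt
  have hkn : (k : ℕ) < n := k.isLt
  rcases lt_or_ge (i : ℕ) (k : ℕ) with h | h
  · -- i < k : witness at k-1
    have hm : ((k : ℕ) - 1) + 1 < n := by omega
    apply bTerm_mem op n x i _ hm
    · rw [Fin.succAbove_of_le_castSucc _ _ (by rw [Fin.le_def]; simp only [Fin.coe_castSucc]; omega),
          Fin.succAbove_of_le_castSucc _ _ (by rw [Fin.le_def]; simp only [Fin.coe_castSucc]; omega)]
      have e1 : (Fin.succ ⟨(k:ℕ) - 1, Nat.lt_of_succ_lt hm⟩ : Fin (n+1)) = k.castSucc := by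
        rw [Fin.ext_iff]; simp only [Fin.val_succ, Fin.coe_castSucc]; omega
      have e2 : (Fin.succ ⟨(k:ℕ) - 1 + 1, hm⟩ : Fin (n+1)) = k.succ := by
        rw [Fin.ext_iff]; simp only [Fin.val_succ]; omega
      rw [e1, e2, hk]
    · rw [if_neg (by rw [Fin.lt_def]; simp only [Fin.coe_castSucc]; omega),
          if_neg (by rw [Fin.lt_def]; simp only [Fin.coe_castSucc]; omega)]
      have e1 : (Fin.succ ⟨(k:ℕ) - 1, Nat.lt_of_succ_lt hm⟩ : Fin (n+1)) = k.castSucc := by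
        rw [Fin.ext_iff]; simp only [Fin.val_succ, Fin.coe_castSucc]; omega
      have e2 : (Fin.succ ⟨(k:ℕ) - 1 + 1, hm⟩ : Fin (n+1)) = k.succ := by
        rw [Fin.ext_iff]; simp only [Fin.val_succ]; omega
      rw [e1, e2, hk]
  · -- i ≥ k + 2 : witness at k
    have hik3 : (k : ℕ) + 2 ≤ (i : ℕ) := by omega
    have hm : (k : ℕ) + 1 < n := by omega
    apply bTerm_mem op n x i _ hm
    · rw [Fin.succAbove_of_castSucc_lt _ _ (by rw [Fin.lt_def]; simp only [Fin.coe_castSucc]; omega),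
          Fin.succAbove_of_castSucc_lt _ _ (by rw [Fin.lt_def]; simp only [Fin.coe_castSucc]; omega)]
      have e1 : (Fin.castSucc ⟨(k:ℕ), Nat.lt_of_succ_lt hm⟩ : Fin (n+1)) = k.castSucc := rfl
      have e2 : (Fin.castSucc ⟨(k:ℕ) + 1, hm⟩ : Fin (n+1)) = k.succ := rfl
      rw [e1, e2, hk]
    · rw [if_pos (by rw [Fin.lt_def]; simp only [Fin.coe_castSucc]; omega),
          if_pos (by rw [Fin.lt_def]; simp only [Fin.coe_castSucc]; omega)]
      have e1 : (Fin.castSucc ⟨(k:ℕ), Nat.lt_of_succ_lt hm⟩ : Fin (n+1)) = k.castSucc := rfl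
      have e2 : (Fin.castSucc ⟨(k:ℕ) + 1, hm⟩ : Fin (n+1)) = k.succ := rfl
      rw [e1, e2, hk]
end

section
/- Let X be a quandle, A an Alexander quandle (Z[T,T^{-1}]-module with operation a*b = Ta+(1-T)b), and φ: X×X → A a function satisfying the twisted 2-cocycle condition T·φ(x₁,x₂) + φ(x₁*x₂, x₃) = T·φ(x₁,x₃) + (1-T)·φ(x₂,x₃) + φ(x₁*x₃, x₂*x₃) together with φ(x,x) = 0 for all x. Then the operation (a₁,x₁)*(a₂,x₂) = (a₁*a₂ + φ(x₁,x₂), x₁*x₂) on A × X defines a quandle (the Alexander extension AE(X,A,φ)). -/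
open LaurentPolynomial

/-- If `φ` is a twisted quandle 2-cocycle on a quandle `X` with coefficients in
an Alexander quandle `A`, then `(a₁,x₁)*(a₂,x₂) = (a₁*a₂ + φ(x₁,x₂), x₁*x₂)`
defines a quandle structure on `A × X` (the Alexander extension `AE(X,A,φ)`). -/
theorem alexander_extension_is_quandle {X : Type*} (op : X → X → X)
    (h1 : ∀ a, op a a = a)
    (h2 : ∀ b, Function.Bijective (fun x => op x b))
    (h3 : ∀ a b c, op (op a b) c = op (op a c) (op b c))
    (A : Type*) [AddCommGroup A] [Module (LaurentPolynomial ℤ) A]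
    (opA : A → A → A)
    (hopA : ∀ a b : A, opA a b = (T 1 : LaurentPolynomial ℤ) • a +
      ((1 : LaurentPolynomial ℤ) - T 1) • b)
    (φ : X → X → A)
    (hcocycle : ∀ x₁ x₂ x₃ : X,
      (T 1 : LaurentPolynomial ℤ) • φ x₁ x₂ + φ (op x₁ x₂) x₃ =
        (T 1 : LaurentPolynomial ℤ) • φ x₁ x₃ +
          ((1 : LaurentPolynomial ℤ) - T 1) • φ x₂ x₃ +
          φ (op x₁ x₃) (op x₂ x₃))
    (hdeg : ∀ x : X, φ x x = 0)
    (opE : A × X → A × X → A × X)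
    (hopE : ∀ e₁ e₂ : A × X,
      opE e₁ e₂ = (opA e₁.1 e₂.1 + φ e₁.2 e₂.2, op e₁.2 e₂.2)) :
    (∀ e : A × X, opE e e = e) ∧
    (∀ e₂ : A × X, Function.Bijective (fun e => opE e e₂)) ∧
    (∀ e₁ e₂ e₃ : A × X, opE (opE e₁ e₂) e₃ = opE (opE e₁ e₃) (opE e₂ e₃)) := by
  have hT : (T (-1) : LaurentPolynomial ℤ) * T 1 = 1 := by
    rw [← T_add]; norm_num
  have hTinj : ∀ a b : A, (T 1 : LaurentPolynomial ℤ) • a = (T 1 : LaurentPolynomial ℤ) • b → a = b := by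
    intro a b h
    have := congrArg (fun z => (T (-1) : LaurentPolynomial ℤ) • z) h
    simpa [smul_smul, hT] using this
  refine ⟨?_, ?_, ?_⟩
  · rintro ⟨a, x⟩
    simp [hopE, hopA, hdeg, h1, sub_smul]
  · rintro ⟨b, y⟩
    constructor
    · rintro ⟨a, x⟩ ⟨a', x'⟩ h
      simp only [hopE, hopA, Prod.mk.injEq] at h
      obtain ⟨hA, hX⟩ := h
      have hx : x = x' := (h2 y).injective hX
      subst hx
      have h' : (T 1 : LaurentPolynomial ℤ) • a = (T 1 : LaurentPolynomial ℤ) • a' := by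
        linear_combination (norm := module) hA
      exact Prod.ext (hTinj _ _ h') rfl
    · rintro ⟨c, z⟩
      obtain ⟨x, hx⟩ := (h2 y).surjective z
      refine ⟨((T (-1) : LaurentPolynomial ℤ) • (c - ((1 : LaurentPolynomial ℤ) - T 1) • b - φ x y), x), ?_⟩
      simp only [hopE, hopA]
      refine Prod.ext ?_ hx
      show (T 1 : LaurentPolynomial ℤ) • ((T (-1) : LaurentPolynomial ℤ) • (c - ((1 : LaurentPolynomial ℤ) - T 1) • b - φ x y)) + ((1 : LaurentPolynomial ℤ) - T 1) • b + φ x y = c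
      rw [smul_smul, mul_comm, hT, one_smul]
      abel
  · rintro ⟨a₁, x₁⟩ ⟨a₂, x₂⟩ ⟨a₃, x₃⟩
    simp only [hopE, hopA, Prod.mk.injEq]
    refine ⟨?_, h3 x₁ x₂ x₃⟩
    linear_combination (norm := module) hcocycle x₁ x₂ x₃
end

section
/- Conversely, if E is a quandle, A an Alexander quandle, X a quandle, and f: E → A × X a bijection such that there is a function φ: X × X → A with f(e₁*e₂) = (a₁*a₂ + φ(x₁,x₂), x₁*x₂) whenever f(e_i) = (a_i, x_i), then φ satisfies the twisted 2-cocycle condition T·φ(x₁,x₂) + φ(x₁*x₂,x₃) = T·φ(x₁,x₃) + (1-T)·φ(x₂,x₃) + φ(x₁*x₃, x₂*x₃) and φ(x,x) = 0 for all x. -/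
open LaurentPolynomial

/-- If a quandle `E` is identified, via a bijection `f : E → A × X`, with a
twisted product of a quandle `X` and an Alexander quandle `A` so that
`f(e₁*e₂) = (a₁*a₂ + φ(x₁,x₂), x₁*x₂)` whenever `f(eᵢ) = (aᵢ,xᵢ)`, then `φ` is
a twisted quandle 2-cocycle: it satisfies the twisted 2-cocycle condition and
`φ(x,x) = 0`. -/
theorem cocycle_of_alexander_extension {X : Type*} (op : X → X → X)
    (h1 : ∀ a, op a a = a)
    (h2 : ∀ b, Function.Bijective (fun x => op x b))
    (h3 : ∀ a b c, op (op a b) c = op (op a c) (op b c))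
    {E : Type*} (opE : E → E → E)
    (hE1 : ∀ a, opE a a = a)
    (hE2 : ∀ b, Function.Bijective (fun x => opE x b))
    (hE3 : ∀ a b c, opE (opE a b) c = opE (opE a c) (opE b c))
    (A : Type*) [AddCommGroup A] [Module (LaurentPolynomial ℤ) A]
    (opA : A → A → A)
    (hopA : ∀ a b : A, opA a b = (T 1 : LaurentPolynomial ℤ) • a +
      ((1 : LaurentPolynomial ℤ) - T 1) • b)
    (f : E → A × X) (hf : Function.Bijective f)
    (φ : X → X → A)
    (hcompat : ∀ e₁ e₂ : E,
      f (opE e₁ e₂) =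
        (opA (f e₁).1 (f e₂).1 + φ (f e₁).2 (f e₂).2, op (f e₁).2 (f e₂).2)) :
    (∀ x₁ x₂ x₃ : X,
      (T 1 : LaurentPolynomial ℤ) • φ x₁ x₂ + φ (op x₁ x₂) x₃ =
        (T 1 : LaurentPolynomial ℤ) • φ x₁ x₃ +
          ((1 : LaurentPolynomial ℤ) - T 1) • φ x₂ x₃ +
          φ (op x₁ x₃) (op x₂ x₃)) ∧
    (∀ x : X, φ x x = 0) := by
  have hsurj := hf.2
  have key : ∀ x : X, ∃ e : E, f e = ((0 : A), x) := fun x => hsurj (0, x)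
  constructor
  · intro x₁ x₂ x₃
    obtain ⟨e₁, he₁⟩ := key x₁
    obtain ⟨e₂, he₂⟩ := key x₂
    obtain ⟨e₃, he₃⟩ := key x₃
    have h12 := hcompat e₁ e₂
    rw [he₁, he₂] at h12
    have h13 := hcompat e₁ e₃
    rw [he₁, he₃] at h13
    have h23 := hcompat e₂ e₃
    rw [he₂, he₃] at h23
    simp only [hopA, smul_zero, add_zero, zero_add] at h12 h13 h23
    have hL := hcompat (opE e₁ e₂) e₃
    rw [h12, he₃] at hL
    have hR := hcompat (opE e₁ e₃) (opE e₂ e₃)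
    rw [h13, h23] at hR
    rw [hE3] at hL
    rw [hL] at hR
    have := (Prod.mk.injEq _ _ _ _).mp hR
    simp only [hopA, smul_zero, add_zero, sub_smul, one_smul, smul_add] at this
    have h := this.1
    linear_combination (norm := module) h
  · intro x
    obtain ⟨e, he⟩ := key x
    have h := hcompat e e
    rw [hE1, he, hopA] at h
    simp only [smul_zero, add_zero, zero_add] at h
    have := (Prod.mk.injEq _ _ _ _).mp h.symm
    exact this.1
end

section
/- Let 0 → N → G → A → 0 be a short exact sequence of Z[T,T^{-1}]-module homomorphisms, s: A → G a set-theoretic section with s(0) = 0, and η: X → A a quandle homomorphism from a quandle X to the Alexander quandle A. Define φ: X × X → N by i(φ(x₁,x₂)) = T·s(η(x₁)) + s(η(x₂)) - [T·s(η(x₂)) + s(η(x₁*x₂))]. Then φ is a twisted quandle 2-cocycle: it satisfies the 2-cocycle condition and φ(x,x) = 0 for all x. -/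
open LaurentPolynomial

/-- Given a short exact sequence `0 → N → G → A → 0` of `ℤ[T,T⁻¹]`-modules, a
normalized set-theoretic section `s` of `p`, and a quandle homomorphism
`η : X → A` into the Alexander quandle `A`, the function `φ` measuring the
failure of `s∘η` to be a homomorphism is a twisted quandle 2-cocycle. -/
theorem obstruction_is_twisted_two_cocycle {X : Type*} (op : X → X → X)
    (h1 : ∀ a, op a a = a)
    (h2 : ∀ b, Function.Bijective (fun x => op x b))
    (h3 : ∀ a b c, op (op a b) c = op (op a c) (op b c))
    (N G A : Type*) [AddCommGroup N] [AddCommGroup G] [AddCommGroup A]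
    [Module (LaurentPolynomial ℤ) N] [Module (LaurentPolynomial ℤ) G]
    [Module (LaurentPolynomial ℤ) A]
    (i : N →ₗ[LaurentPolynomial ℤ] G) (p : G →ₗ[LaurentPolynomial ℤ] A)
    (hi : Function.Injective i) (hp : Function.Surjective p)
    (hexact : LinearMap.range i = LinearMap.ker p)
    (s : A → G) (hs : ∀ a : A, p (s a) = a) (hs0 : s 0 = 0)
    (η : X → A)
    (hη : ∀ x₁ x₂ : X, η (op x₁ x₂) =
      (T 1 : LaurentPolynomial ℤ) • η x₁ +
        ((1 : LaurentPolynomial ℤ) - T 1) • η x₂)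
    (φ : X → X → N)
    (hφ : ∀ x₁ x₂ : X, i (φ x₁ x₂) =
      (T 1 : LaurentPolynomial ℤ) • s (η x₁) + s (η x₂) -
        ((T 1 : LaurentPolynomial ℤ) • s (η x₂) + s (η (op x₁ x₂)))) :
    (∀ x₁ x₂ x₃ : X,
      (T 1 : LaurentPolynomial ℤ) • φ x₁ x₂ + φ (op x₁ x₂) x₃ =
        (T 1 : LaurentPolynomial ℤ) • φ x₁ x₃ +
          ((1 : LaurentPolynomial ℤ) - T 1) • φ x₂ x₃ +
          φ (op x₁ x₃) (op x₂ x₃)) ∧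
    (∀ x : X, φ x x = 0) := by
  constructor
  · intro x₁ x₂ x₃
    apply hi
    rw [map_add, map_smul, map_add, map_add, map_smul, map_smul,
      hφ, hφ, hφ, hφ, hφ, h3 x₁ x₂ x₃]
    module
  · intro x
    apply hi
    rw [hφ, h1, map_zero]
    module
end

section
/- In the setting of the obstruction cocycle: if s, s' : A → G are two normalized set-theoretic sections of p: G → A, and φ, φ' the corresponding twisted 2-cocycles defined from a quandle homomorphism η: X → A, then φ - φ' is a twisted 2-coboundary, i.e., there is a function ξ: X → N with φ(x₁,x₂) - φ'(x₁,x₂) = T·ξ(x₁) + (1-T)·ξ(x₂) - ξ(x₁*x₂) for all x₁,x₂. -/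
open LaurentPolynomial

/-- Two normalized set-theoretic sections `s, s'` of `p : G → A` yield
obstruction 2-cocycles `φ, φ'` that differ by a twisted 2-coboundary. -/
theorem obstruction_cocycles_differ_by_coboundary {X : Type*} (op : X → X → X)
    (h1 : ∀ a, op a a = a)
    (h2 : ∀ b, Function.Bijective (fun x => op x b))
    (h3 : ∀ a b c, op (op a b) c = op (op a c) (op b c))
    (N G A : Type*) [AddCommGroup N] [AddCommGroup G] [AddCommGroup A]
    [Module (LaurentPolynomial ℤ) N] [Module (LaurentPolynomial ℤ) G]
    [Module (LaurentPolynomial ℤ) A]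
    (i : N →ₗ[LaurentPolynomial ℤ] G) (p : G →ₗ[LaurentPolynomial ℤ] A)
    (hi : Function.Injective i) (hp : Function.Surjective p)
    (hexact : LinearMap.range i = LinearMap.ker p)
    (s s' : A → G) (hs : ∀ a : A, p (s a) = a) (hs0 : s 0 = 0)
    (hs' : ∀ a : A, p (s' a) = a) (hs'0 : s' 0 = 0)
    (η : X → A)
    (hη : ∀ x₁ x₂ : X, η (op x₁ x₂) =
      (T 1 : LaurentPolynomial ℤ) • η x₁ +
        ((1 : LaurentPolynomial ℤ) - T 1) • η x₂)
    (φ φ' : X → X → N)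
    (hφ : ∀ x₁ x₂ : X, i (φ x₁ x₂) =
      (T 1 : LaurentPolynomial ℤ) • s (η x₁) + s (η x₂) -
        (T 1 : LaurentPolynomial ℤ) • s (η x₂) - s (η (op x₁ x₂)))
    (hφ' : ∀ x₁ x₂ : X, i (φ' x₁ x₂) =
      (T 1 : LaurentPolynomial ℤ) • s' (η x₁) + s' (η x₂) -
        (T 1 : LaurentPolynomial ℤ) • s' (η x₂) - s' (η (op x₁ x₂))) :
    ∃ ξ : X → N, ∀ x₁ x₂ : X,
      φ x₁ x₂ - φ' x₁ x₂ =
        (T 1 : LaurentPolynomial ℤ) • ξ x₁ +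
          ((1 : LaurentPolynomial ℤ) - T 1) • ξ x₂ - ξ (op x₁ x₂) := by
  have key : ∀ a : A, ∃ n : N, i n = s a - s' a := by
    intro a
    have : s a - s' a ∈ LinearMap.ker p := by
      simp [LinearMap.mem_ker, map_sub, hs, hs']
    rw [← hexact] at this
    exact this
  choose ξ hξ using key
  refine ⟨fun x => ξ (η x), fun x₁ x₂ => ?_⟩
  apply hi
  rw [map_sub, hφ, hφ', map_sub, map_add, map_smul, map_smul, hξ, hξ, hξ,
    sub_smul, one_smul, smul_sub]
  module
end

section
/- If the obstruction 2-cocycle φ associated with a quandle homomorphism η: X → A (via a short exact sequence 0 → N → G → A → 0 of Z[T,T^{-1}]-modules and a normalized section s) is a coboundary, then η lifts: there exists a quandle homomorphism η': X → G with p∘η' = η. -/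
open LaurentPolynomial

/-- If the obstruction 2-cocycle of a quandle homomorphism `η : X → A` (via a
short exact sequence `0 → N → G → A → 0` and normalized section `s`) is a
coboundary, then `η` lifts to a quandle homomorphism `η' : X → G` with
`p ∘ η' = η`. -/
theorem lift_of_obstruction_coboundary {X : Type*} (op : X → X → X)
    (h1 : ∀ a, op a a = a)
    (h2 : ∀ b, Function.Bijective (fun x => op x b))
    (h3 : ∀ a b c, op (op a b) c = op (op a c) (op b c))
    (N G A : Type*) [AddCommGroup N] [AddCommGroup G] [AddCommGroup A]
    [Module (LaurentPolynomial ℤ) N] [Module (LaurentPolynomial ℤ) G]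
    [Module (LaurentPolynomial ℤ) A]
    (i : N →ₗ[LaurentPolynomial ℤ] G) (p : G →ₗ[LaurentPolynomial ℤ] A)
    (hi : Function.Injective i) (hp : Function.Surjective p)
    (hexact : LinearMap.range i = LinearMap.ker p)
    (s : A → G) (hs : ∀ a : A, p (s a) = a) (hs0 : s 0 = 0)
    (η : X → A)
    (hη : ∀ x₁ x₂ : X, η (op x₁ x₂) =
      (T 1 : LaurentPolynomial ℤ) • η x₁ +
        ((1 : LaurentPolynomial ℤ) - T 1) • η x₂)
    (φ : X → X → N)
    (hφ : ∀ x₁ x₂ : X, i (φ x₁ x₂) =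
      (T 1 : LaurentPolynomial ℤ) • s (η x₁) + s (η x₂) -
        (T 1 : LaurentPolynomial ℤ) • s (η x₂) - s (η (op x₁ x₂)))
    (hcobdry : ∃ ξ : X → N, ∀ x₁ x₂ : X,
      φ x₁ x₂ = (T 1 : LaurentPolynomial ℤ) • ξ x₁ +
        ((1 : LaurentPolynomial ℤ) - T 1) • ξ x₂ - ξ (op x₁ x₂)) :
    ∃ η' : X → G,
      (∀ x₁ x₂ : X, η' (op x₁ x₂) =
        (T 1 : LaurentPolynomial ℤ) • η' x₁ +
          ((1 : LaurentPolynomial ℤ) - T 1) • η' x₂) ∧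
      (∀ x : X, p (η' x) = η x) := by
  obtain ⟨ξ, hξ⟩ := hcobdry
  refine ⟨fun x => s (η x) - i (ξ x), ?_, ?_⟩
  · intro x₁ x₂
    have h := hφ x₁ x₂
    have h2 := congrArg i (hξ x₁ x₂)
    simp only [map_add, map_sub, map_smul] at h2
    have key : i (φ x₁ x₂) = (T 1 : LaurentPolynomial ℤ) • i (ξ x₁) +
        ((1 : LaurentPolynomial ℤ) - T 1) • i (ξ x₂) - i (ξ (op x₁ x₂)) := h2
    rw [h] at key
    have : s (η (op x₁ x₂)) - i (ξ (op x₁ x₂)) =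
        (T 1 : LaurentPolynomial ℤ) • (s (η x₁) - i (ξ x₁)) +
        ((1 : LaurentPolynomial ℤ) - T 1) • (s (η x₂) - i (ξ x₂)) := by
      have := key
      simp only [smul_sub, sub_smul, one_smul] at *
      abel_nf at this ⊢
      linear_combination (norm := abel_nf) -this
    exact this
  · intro x
    have : p (i (ξ x)) = 0 := by
      have : i (ξ x) ∈ LinearMap.ker p := hexact ▸ LinearMap.mem_range_self i (ξ x)
      exact this
    simp [this, hs]
end

section
/- Let p be a prime and m > 1. The dihedral quandle R_{p^m} is an Alexander extension of R_{p^{m-1}} by R_p: there is a bijection f: R_{p^m} → R_p × R_{p^{m-1}} and a function φ: R_{p^{m-1}} × R_{p^{m-1}} → R_p such that f(e₁*e₂) = (a₁*a₂ + φ(x₁,x₂), x₁*x₂) whenever f(e_i) = (a_i, x_i), and consequently φ is a twisted 2-cocycle (with T acting as -1). -/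
/-! Write `A ∈ ℤ/qpℤ` as `A = r + q·d` with `0 ≤ r < q` and `d < p` its top digit. Then
`A ↦ (d, r)` is a bijection, and adding `q·k` to `A` shifts its top digit by `k`. Hence
`2e₂ - e₁ = (2r₂ - r₁) + q(2d₂ - d₁)` has top digit `2d₂ - d₁ + φ(r₁, r₂)`, where `φ(r₁, r₂)` is
the top digit of `2r₂ - r₁` computed in `ℤ/qpℤ`: the carry. The cocycle identities are the first
coordinate of the quandle axioms `(x * y) * z = (x * z) * (y * z)` and `x * x = x` transported
through the extension. -/

namespace ZMod

variable {N : ℕ} (q p : ℕ)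

def topDigit (A : ZMod N) : ZMod p := ((A.val / q : ℕ) : ZMod p)

theorem topDigit_natCast (hN : q * p = N) (a : ℕ) :
    topDigit q p (a : ZMod N) = ((a / q : ℕ) : ZMod p) := by
  subst hN
  rw [topDigit, val_natCast, Nat.mod_mul_right_div_self, natCast_mod]

variable {q p}

theorem topDigit_add_mul [NeZero N] (hN : q * p = N) (A k : ZMod N) :
    topDigit q p (A + (q : ZMod N) * k) =
      topDigit q p A + castHom (Dvd.intro_left q hN) (ZMod p) k := by
  have hq : 0 < q := Nat.pos_of_ne_zero (left_ne_zero_of_mul (hN ▸ NeZero.ne N))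
  conv_lhs => rw [← natCast_zmod_val A, ← natCast_zmod_val k, ← Nat.cast_mul, ← Nat.cast_add,
    topDigit_natCast q p hN, Nat.add_mul_div_left _ _ hq]
  rw [castHom_apply, cast_eq_val, Nat.cast_add, topDigit]

theorem natCast_val_eq_castHom [NeZero N] (hqN : q ∣ N) (A : ZMod N) :
    ((A.val : ℕ) : ZMod q) = castHom hqN (ZMod q) A := by
  rw [castHom_apply, natCast_val]

theorem eq_natCast_mod_add_mul_natCast_div [NeZero N] (q : ℕ) (A : ZMod N) :
    A = ((A.val % q : ℕ) : ZMod N) + (q : ZMod N) * ((A.val / q : ℕ) : ZMod N) := by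
  rw [← Nat.cast_mul, ← Nat.cast_add, Nat.mod_add_div, natCast_zmod_val]

theorem topDigit_two_mul_sub [NeZero N] (hN : q * p = N) (e₁ e₂ : ZMod N) :
    topDigit q p (2 * e₂ - e₁) = 2 * topDigit q p e₂ - topDigit q p e₁ +
      topDigit q p (2 * ((e₂.val : ZMod q).val : ZMod N) - ((e₁.val : ZMod q).val : ZMod N)) := by
  simp only [val_natCast]
  have hdecomp : 2 * e₂ - e₁ =
      (2 * ((e₂.val % q : ℕ) : ZMod N) - ((e₁.val % q : ℕ) : ZMod N)) +
        (q : ZMod N) * (2 * ((e₂.val / q : ℕ) : ZMod N) - ((e₁.val / q : ℕ) : ZMod N)) := by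
    conv_lhs =>
      rw [eq_natCast_mod_add_mul_natCast_div q e₁, eq_natCast_mod_add_mul_natCast_div q e₂]
    ring
  rw [hdecomp, topDigit_add_mul hN, map_sub, map_mul, map_ofNat, map_natCast, map_natCast]
  simp only [topDigit]
  ring

theorem bijective_topDigit_prod_natCast_val [NeZero N] (hN : q * p = N) :
    Function.Bijective fun A : ZMod N => (topDigit q p A, ((A.val : ℕ) : ZMod q)) := by
  have hN0 : q * p ≠ 0 := hN ▸ NeZero.ne N
  have : NeZero q := ⟨left_ne_zero_of_mul hN0⟩
  have : NeZero p := ⟨right_ne_zero_of_mul hN0⟩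
  have hdiv_lt (A : ZMod N) : A.val / q < p :=
    Nat.div_lt_of_lt_mul (hN ▸ A.val_lt)
  refine (Fintype.bijective_iff_injective_and_card _).2 ⟨fun A B hAB => ?_, ?_⟩
  · simp only [topDigit, Prod.mk.injEq, natCast_eq_natCast_iff'] at hAB
    rw [Nat.mod_eq_of_lt (hdiv_lt A), Nat.mod_eq_of_lt (hdiv_lt B)] at hAB
    apply val_injective
    rw [← Nat.div_add_mod A.val q, ← Nat.div_add_mod B.val q, hAB.1, hAB.2]
  · simp [card, ← hN, mul_comm]

end ZMod

theorem cocycle_of_alexander_extension_s17 {E A X : Type*} [CommRing E] [CommRing A] [CommRing X]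
    (f : E → A × X) (hf : Function.Surjective (Prod.snd ∘ f)) (φ : X → X → A)
    (hφ : ∀ e₁ e₂ : E, f (2 * e₂ - e₁) =
      (2 * (f e₂).1 - (f e₁).1 + φ (f e₁).2 (f e₂).2, 2 * (f e₂).2 - (f e₁).2))
    (x₁ x₂ x₃ : X) : -φ x₁ x₂ + φ (2 * x₂ - x₁) x₃ =
      -φ x₁ x₃ + 2 * φ x₂ x₃ + φ (2 * x₃ - x₁) (2 * x₃ - x₂) := by
  obtain ⟨e₁, rfl⟩ := hf x₁
  obtain ⟨e₂, rfl⟩ := hf x₂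
  obtain ⟨e₃, rfl⟩ := hf x₃
  have hdist : 2 * e₃ - (2 * e₂ - e₁) = 2 * (2 * e₃ - e₂) - (2 * e₃ - e₁) := by ring
  have h := congrArg (fun e => (f e).1) hdist
  simp only [hφ] at h
  simp only [Function.comp_apply]
  linear_combination h

theorem diag_eq_zero_of_alexander_extension {E A X : Type*} [CommRing E] [CommRing A] [CommRing X]
    (f : E → A × X) (hf : Function.Surjective (Prod.snd ∘ f)) (φ : X → X → A)
    (hφ : ∀ e₁ e₂ : E, f (2 * e₂ - e₁) =
      (2 * (f e₂).1 - (f e₁).1 + φ (f e₁).2 (f e₂).2, 2 * (f e₂).2 - (f e₁).2)) (x : X) :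
    φ x x = 0 := by
  obtain ⟨e, rfl⟩ := hf x
  have h := congrArg (fun e => (f e).1) (show 2 * e - e = e by ring)
  simp only [hφ] at h
  simp only [Function.comp_apply]
  linear_combination h

open ZMod in
/-- For a prime `p` and `m > 1`, the dihedral quandle `R_{p^m}` is an Alexander
extension of `R_{p^{m-1}}` by `R_p`: the map
`f(A) = (A_{m-1}, A mod p^{m-1})` (with `A_{m-1}` the top base-`p` digit) is a
bijection `R_{p^m} → R_p × R_{p^{m-1}}` and there is `φ` with
`f(e₁*e₂) = (a₁*a₂ + φ(x₁,x₂), x₁*x₂)` whenever `f(eᵢ) = (aᵢ,xᵢ)`;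
consequently `φ` is a twisted 2-cocycle with `T` acting as `-1`. -/
theorem dihedral_prime_power_alexander_extension (p m : ℕ) (hp : p.Prime)
    (hm : 1 < m)
    (f : ZMod (p ^ m) → ZMod p × ZMod (p ^ (m - 1)))
    (hf : ∀ A : ZMod (p ^ m),
      f A = (((A.val / p ^ (m - 1) : ℕ) : ZMod p), ((A.val : ℕ) : ZMod (p ^ (m - 1))))) :
    Function.Bijective f ∧
    ∃ φ : ZMod (p ^ (m - 1)) → ZMod (p ^ (m - 1)) → ZMod p,
      (∀ e₁ e₂ : ZMod (p ^ m),
        f (2 * e₂ - e₁) =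
          (2 * (f e₂).1 - (f e₁).1 + φ (f e₁).2 (f e₂).2,
            2 * (f e₂).2 - (f e₁).2)) ∧
      (∀ x₁ x₂ x₃ : ZMod (p ^ (m - 1)),
        -φ x₁ x₂ + φ (2 * x₂ - x₁) x₃ =
          -φ x₁ x₃ + 2 * φ x₂ x₃ + φ (2 * x₃ - x₁) (2 * x₃ - x₂)) ∧
      (∀ x : ZMod (p ^ (m - 1)), φ x x = 0) := by
  have hN : p ^ (m - 1) * p = p ^ m := by rw [← pow_succ, Nat.sub_add_cancel hm.le]
  have : NeZero (p ^ m) := ⟨pow_ne_zero m hp.ne_zero⟩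
  have hf_eq : f = fun A => (topDigit (p ^ (m - 1)) p A, ((A.val : ℕ) : ZMod (p ^ (m - 1)))) :=
    funext hf
  have hbij : Function.Bijective f := hf_eq ▸ bijective_topDigit_prod_natCast_val hN
  let φ (x₁ x₂ : ZMod (p ^ (m - 1))) : ZMod p :=
    topDigit (p ^ (m - 1)) p (2 * ((x₂.val : ℕ) : ZMod (p ^ m)) - ((x₁.val : ℕ) : ZMod (p ^ m)))
  have hext (e₁ e₂ : ZMod (p ^ m)) : f (2 * e₂ - e₁) =
      (2 * (f e₂).1 - (f e₁).1 + φ (f e₁).2 (f e₂).2, 2 * (f e₂).2 - (f e₁).2) := by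
    subst hf_eq
    refine Prod.ext (topDigit_two_mul_sub hN e₁ e₂) ?_
    simp only [natCast_val_eq_castHom (Dvd.intro p hN), map_sub, map_mul, map_ofNat]
  have hsnd : Function.Surjective (Prod.snd ∘ f) := Prod.snd_surjective.comp hbij.2
  exact ⟨hbij, φ, hext, cocycle_of_alexander_extension_s17 f hsnd φ hext,
    diag_eq_zero_of_alexander_extension f hsnd φ hext⟩
end
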